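/- Let n, q ∈ ℕ, let f : ℝⁿ × ℝ^q → ℝⁿ, let U ⊆ ℝ^q be a nonempty input-constraint set, and write f̄(x) := f(x,0). Let h : ℝⁿ → ℝ, m ≥ 1, and φ_1,…,φ_m ∈ (0,1]. Define ψ_0 := h; for l = 1,…,m−1, ψ_l(x) := ψ_{l−1}(f̄(x)) − ψ_{l−1}(x) + φ_l ψ_{l−1}(x); and ψ_m(x,u) := ψ_{m−1}(f(x,u)) − ψ_{m−1}(x) + φ_m ψ_{m−1}(x). Define C^l := {x ∈ ℝⁿ : ψ_l(x) ≥ 0} for l = 0,…,m−1. Assume (RD): for all x ∈ ℝⁿ, all u ∈ U and all 0 ≤ l ≤ m−2, h(f̄^l(f(x,u))) = h(f̄^{l+1}(x)). Let x : ℕ → ℝⁿ and u : ℕ → ℝ^q satisfy u(t) ∈ U, x(t+1) = f(x(t), u(t)), and ψ_m(x(t), u(t)) ≥ 0 for all t ∈ ℕ, with x(0) ∈ ⋂_{l=0}^{m−1} C^l. Then x(t) ∈ ⋂_{l=0}^{m−1} C^l for all t ∈ ℕ; in particular h(x(t)) ≥ 0 for all t ∈ ℕ. -/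

import Mathlib

/-! The recursion `ψ_{l+1} = ψ_l ∘ f̄ - ψ_l + φ_{l+1} ψ_l` only looks at `ψ_l` along the uncontrolled
orbit, so by (RD) every `ψ_l` with `l ≤ m - 2` is blind to the control: `ψ_l (f x u) = ψ_l (f̄ x)`.
Hence, for every `l < m`, `ψ_l (x(t+1)) - ψ_l (x(t)) + φ_{l+1} ψ_l (x(t))` is either `ψ_{l+1} (x(t))`
or the DHCBF constraint `ψ_m (x(t), u(t))`, and is nonnegative along a trajectory in `⋂ C^l`.
Since `φ_{l+1} ≤ 1`, this forces `ψ_l (x(t+1)) ≥ (1 - φ_{l+1}) ψ_l (x(t)) ≥ 0`. -/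

theorem nonneg_of_sub_add_mul_nonneg {a b c : ℝ} (hc : c ≤ 1) (hb : 0 ≤ b)
    (h : 0 ≤ a - b + c * b) : 0 ≤ a := by
  nlinarith

section DHCBF

variable {X V : Type*} {g : X → X} {φ : ℕ → ℝ} {ψ : ℕ → X → ℝ}

theorem dhcbf_iterate_eq_of_iterate_eq {N : ℕ}
    (hψ : ∀ l < N, ∀ x, ψ (l + 1) x = ψ l (g x) - ψ l x + φ (l + 1) * ψ l x)
    {a b : X} (hab : ∀ j ≤ N, ψ 0 (g^[j] a) = ψ 0 (g^[j] b)) :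
    ∀ l j, l + j ≤ N → ψ l (g^[j] a) = ψ l (g^[j] b) := by
  intro l
  induction l with
  | zero => simpa using hab
  | succ l ih =>
    intro j hlj
    rw [hψ l (by omega), hψ l (by omega), ← Function.iterate_succ_apply' g,
      ← Function.iterate_succ_apply' g, ih j (by omega), ih (j + 1) (by omega)]

theorem dhcbf_apply_control_eq {f : X → V → X} {U : Set V} {m : ℕ}
    (hψ : ∀ l < m - 1, ∀ x, ψ (l + 1) x = ψ l (g x) - ψ l x + φ (l + 1) * ψ l x)
    (hRD : ∀ x, ∀ u ∈ U, ∀ j, j + 2 ≤ m → ψ 0 (g^[j] (f x u)) = ψ 0 (g^[j + 1] x))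
    {x : X} {u : V} (hu : u ∈ U) {l : ℕ} (hl : l + 2 ≤ m) :
    ψ l (f x u) = ψ l (g x) := by
  obtain ⟨N, rfl⟩ := Nat.exists_eq_add_of_le' (le_of_add_le_right hl)
  have hagree : ∀ j ≤ N, ψ 0 (g^[j] (f x u)) = ψ 0 (g^[j] (g x)) := fun j hj => by
    rw [← Function.iterate_succ_apply]
    exact hRD x u hu j (by omega)
  exact dhcbf_iterate_eq_of_iterate_eq (fun l hl => hψ l (by omega)) hagree l 0 (by omega)

theorem dhcbf_safe_step {f : X → V → X} {U : Set V} {m : ℕ}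
    (hφ : ∀ l, 1 ≤ l → l ≤ m → φ l ≤ 1)
    (hψ : ∀ l < m - 1, ∀ x, ψ (l + 1) x = ψ l (g x) - ψ l x + φ (l + 1) * ψ l x)
    (hRD : ∀ x, ∀ u ∈ U, ∀ j, j + 2 ≤ m → ψ 0 (g^[j] (f x u)) = ψ 0 (g^[j + 1] x))
    {x : X} {u : V} (hu : u ∈ U)
    (hcbf : 0 ≤ ψ (m - 1) (f x u) - ψ (m - 1) x + φ m * ψ (m - 1) x)
    (hx : ∀ l < m, 0 ≤ ψ l x) :
    ∀ l < m, 0 ≤ ψ l (f x u) := by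
  intro l hl
  refine nonneg_of_sub_add_mul_nonneg (hφ (l + 1) (by omega) hl) (hx l hl) ?_
  rcases Nat.lt_or_ge (l + 1) m with hlt | hge
  · rw [dhcbf_apply_control_eq hψ hRD hu hlt, ← hψ l (by omega) x]
    exact hx (l + 1) hlt
  · obtain rfl : m = l + 1 := by omega
    simpa using hcbf

end DHCBF

theorem dhcbf_forward_invariance_general
    (n q : ℕ) (f : (Fin n → ℝ) → (Fin q → ℝ) → (Fin n → ℝ))
    (U : Set (Fin q → ℝ))
    (h : (Fin n → ℝ) → ℝ) (m : ℕ) (hm : 1 ≤ m) (φ : ℕ → ℝ)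
    (hφ : ∀ l : ℕ, 1 ≤ l → l ≤ m → 0 < φ l ∧ φ l ≤ 1)
    (ψ : ℕ → (Fin n → ℝ) → ℝ)
    (hψ0 : ψ 0 = h)
    (hψ : ∀ l : ℕ, l < m - 1 → ∀ x,
      ψ (l + 1) x = ψ l (f x 0) - ψ l x + φ (l + 1) * ψ l x)
    (hRD : ∀ x : Fin n → ℝ, ∀ u ∈ U, ∀ l : ℕ, l + 2 ≤ m →
      h ((fun y => f y 0)^[l] (f x u)) = h ((fun y => f y 0)^[l + 1] x))
    (x : ℕ → (Fin n → ℝ)) (u : ℕ → (Fin q → ℝ))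
    (hu : ∀ t : ℕ, u t ∈ U)
    (hdyn : ∀ t : ℕ, x (t + 1) = f (x t) (u t))
    (hcbf : ∀ t : ℕ,
      ψ (m - 1) (f (x t) (u t)) - ψ (m - 1) (x t)
        + φ m * ψ (m - 1) (x t) ≥ 0)
    (hinit : ∀ l < m, ψ l (x 0) ≥ 0) :
    (∀ t : ℕ, ∀ l < m, ψ l (x t) ≥ 0) ∧ (∀ t : ℕ, h (x t) ≥ 0) := by
  subst hψ0
  have hstep : ∀ t, (∀ l < m, ψ l (x t) ≥ 0) → ∀ l < m, ψ l (x (t + 1)) ≥ 0 := fun t hxt => by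
    rw [hdyn t]
    exact dhcbf_safe_step (g := fun y => f y 0) (fun l hl hlm => (hφ l hl hlm).2) hψ hRD (hu t)
      (hcbf t) hxt
  have hinv : ∀ t, ∀ l < m, ψ l (x t) ≥ 0 := fun t => Nat.rec hinit hstep t
  exact ⟨hinv, fun t => hinv t 0 hm⟩

/-- Forward invariance of the intersection of the DHCBF safe sets: under the
relative-degree condition (RD), any admissible trajectory satisfying the
DHCBF constraint `ψ_m(x(t),u(t)) ≥ 0` at every time step and starting in
`⋂ C^l` stays in `⋂ C^l` forever; in particular `h(x(t)) ≥ 0` for all `t`. -/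
theorem dhcbf_forward_invariance
    (n q : ℕ) (f : (Fin n → ℝ) → (Fin q → ℝ) → (Fin n → ℝ))
    (U : Set (Fin q → ℝ)) (hU : U.Nonempty)
    (h : (Fin n → ℝ) → ℝ) (m : ℕ) (hm : 1 ≤ m) (φ : ℕ → ℝ)
    (hφ : ∀ l : ℕ, 1 ≤ l → l ≤ m → 0 < φ l ∧ φ l ≤ 1)
    (ψ : ℕ → (Fin n → ℝ) → ℝ)
    (hψ0 : ψ 0 = h)
    (hψ : ∀ l : ℕ, l < m - 1 → ∀ x,
      ψ (l + 1) x = ψ l (f x 0) - ψ l x + φ (l + 1) * ψ l x)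
    (hRD : ∀ x : Fin n → ℝ, ∀ u ∈ U, ∀ l : ℕ, l + 2 ≤ m →
      h ((fun y => f y 0)^[l] (f x u)) = h ((fun y => f y 0)^[l + 1] x))
    (x : ℕ → (Fin n → ℝ)) (u : ℕ → (Fin q → ℝ))
    (hu : ∀ t : ℕ, u t ∈ U)
    (hdyn : ∀ t : ℕ, x (t + 1) = f (x t) (u t))
    (hcbf : ∀ t : ℕ,
      ψ (m - 1) (f (x t) (u t)) - ψ (m - 1) (x t)
        + φ m * ψ (m - 1) (x t) ≥ 0)
    (hinit : ∀ l < m, ψ l (x 0) ≥ 0) :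
    (∀ t : ℕ, ∀ l < m, ψ l (x t) ≥ 0) ∧ (∀ t : ℕ, h (x t) ≥ 0) :=
  dhcbf_forward_invariance_general n q f U h m hm φ hφ ψ hψ0 hψ hRD x u hu hdyn hcbf hinit
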